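/- arXiv:1905.02065 — 4 statements merged into one kernel-verified Lean document; each statement's English description precedes it below -/
import Mathlib

section
/- Let (Ω, 𝓕, μ) be a probability space with Ω standard Borel, let E and F be standard Borel spaces, let T : Ω → ℝ and X : Ω → E be measurable, let g : E → F be measurable, and set Θ = g ∘ X. Suppose there exists a Markov kernel κ from F to ℝ such that for (μ.map X)-almost every x ∈ E, the regular conditional distribution of T given X = x equals κ(g(x)). Then T and X are conditionally independent given the σ-algebra generated by Θ, i.e., CondIndepFun T X holds with conditioning σ-algebra comap Θ. -/
/-!
`T` and `X` are conditionally independent given `Θ = g ∘ X` as soon as the conditional law of `T`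
given the pair `(Θ, X)` only depends on `Θ` and agrees with the conditional law of `T` given `Θ`.
Both are `κ`: if `condDistrib T X μ = η ∘ f` a.e. for a measurable `f`, then pushing the
disintegration `law (X, T) = law X ⊗ (η ∘ f)` forward along `f × id` gives
`law (f ∘ X, T) = law (f ∘ X) ⊗ η`, i.e. `condDistrib T (f ∘ X) μ = η` a.e.
Take `f = g, η = κ` and `f = (g, id), η = κ ∘ Prod.fst`.
-/

open MeasureTheory ProbabilityTheory

lemma MeasureTheory.Measure.map_prodMap_compProd_comap {α β γ : Type*}
    {mα : MeasurableSpace α} {mβ : MeasurableSpace β} {mγ : MeasurableSpace γ}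
    (ν : Measure α) [IsFiniteMeasure ν] (η : Kernel γ β) [IsFiniteKernel η]
    {f : α → γ} (hf : Measurable f) :
    (ν ⊗ₘ η.comap f hf).map (Prod.map f id) = ν.map f ⊗ₘ η := by
  refine Measure.ext_prod fun {s t} hs ht ↦ ?_
  rw [Measure.map_apply (hf.prodMap measurable_id) (hs.prod ht), Set.preimage_prod_map_prod,
    Set.preimage_id, Measure.compProd_apply_prod (hf hs) ht, Measure.compProd_apply_prod hs ht,
    setLIntegral_map hs (η.measurable_coe ht) hf]
  rfl

namespace ProbabilityTheory

lemma Kernel.prodMkRight_congr_ae {α β γ : Type*} {mα : MeasurableSpace α}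
    {mβ : MeasurableSpace β} {mγ : MeasurableSpace γ} {ν : Measure (α × γ)}
    {κ η : Kernel α β} (h : κ =ᵐ[ν.fst] η) :
    κ.prodMkRight γ =ᵐ[ν] η.prodMkRight γ :=
  ae_of_ae_map measurable_fst.aemeasurable h

lemma condDistrib_comp_ae_eq_of_ae_eq_comap {α β γ Ω : Type*} {mα : MeasurableSpace α}
    {mβ : MeasurableSpace β} {mγ : MeasurableSpace γ} [MeasurableSpace Ω]
    [StandardBorelSpace Ω] [Nonempty Ω] {μ : Measure α} [IsFiniteMeasure μ]
    {X : α → β} {Y : α → Ω} (hX : Measurable X) (hY : AEMeasurable Y μ)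
    {f : β → γ} (hf : Measurable f) {η : Kernel γ Ω} [IsFiniteKernel η]
    (h : condDistrib Y X μ =ᵐ[μ.map X] η.comap f hf) :
    condDistrib Y (f ∘ X) μ =ᵐ[μ.map (f ∘ X)] η := by
  refine condDistrib_ae_eq_of_measure_eq_compProd _ hY ?_
  calc μ.map (fun a ↦ ((f ∘ X) a, Y a))
      = (μ.map (fun a ↦ (X a, Y a))).map (Prod.map f id) := by
        rw [AEMeasurable.map_map_of_aemeasurable (by fun_prop) (by fun_prop)]
        rfl
    _ = (μ.map X ⊗ₘ η.comap f hf).map (Prod.map f id) := by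
        rw [← Measure.compProd_congr h, compProd_map_condDistrib hY]
    _ = μ.map (f ∘ X) ⊗ₘ η := by
        rw [Measure.map_prodMap_compProd_comap _ _ hf, Measure.map_map hf hX]

end ProbabilityTheory

theorem condIndepFun_of_condDistrib_factors_general
    {Ω E F : Type*}
    [MeasurableSpace Ω] [StandardBorelSpace Ω] [Nonempty Ω]
    [MeasurableSpace E] [StandardBorelSpace E]
    [MeasurableSpace F]
    (μ : Measure Ω) [IsProbabilityMeasure μ]
    (T : Ω → ℝ) (X : Ω → E) (g : E → F)
    (hT : Measurable T) (hX : Measurable X) (hg : Measurable g)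
    (hfac : ∃ κ : ProbabilityTheory.Kernel F ℝ, IsMarkovKernel κ ∧
      ∀ᵐ x ∂(μ.map X), condDistrib T X μ x = κ (g x)) :
    CondIndepFun (MeasurableSpace.comap (g ∘ X) inferInstance)
      ((hg.comp hX).comap_le) T X μ := by
  obtain ⟨κ, hκ, hae⟩ := hfac
  have : Nonempty E := ⟨X (Classical.arbitrary Ω)⟩
  have hΘ : condDistrib T (g ∘ X) μ =ᵐ[μ.map (g ∘ X)] κ :=
    condDistrib_comp_ae_eq_of_ae_eq_comap hX hT.aemeasurable hg hae
  have hΘX : condDistrib T (fun ω ↦ (g (X ω), X ω)) μ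
      =ᵐ[μ.map (fun ω ↦ (g (X ω), X ω))] κ.prodMkRight E :=
    condDistrib_comp_ae_eq_of_ae_eq_comap hX hT.aemeasurable (hg.prodMk measurable_id) hae
  refine ((condIndepFun_iff_condDistrib_prod_ae_eq_prodMkRight hT hX (hg.comp hX)).2 ?_).symm
  refine hΘX.trans (Kernel.prodMkRight_congr_ae ?_)
  rw [Measure.fst_map_prodMk hX]
  exact hΘ.symm

/-- If the regular conditional distribution of `T` given `X` depends on `X` only through a
measurable functional `Θ = g ∘ X` (via a Markov kernel `κ` from the range of `g`), then `T`
and `X` are conditionally independent given the σ-algebra generated by `Θ = g ∘ X`. -/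
theorem condIndepFun_of_condDistrib_factors
    {Ω E F : Type*}
    [MeasurableSpace Ω] [StandardBorelSpace Ω] [Nonempty Ω]
    [MeasurableSpace E] [StandardBorelSpace E]
    [MeasurableSpace F] [StandardBorelSpace F]
    (μ : Measure Ω) [IsProbabilityMeasure μ]
    (T : Ω → ℝ) (X : Ω → E) (g : E → F)
    (hT : Measurable T) (hX : Measurable X) (hg : Measurable g)
    (hfac : ∃ κ : ProbabilityTheory.Kernel F ℝ, IsMarkovKernel κ ∧
      ∀ᵐ x ∂(μ.map X), condDistrib T X μ x = κ (g x)) :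
    CondIndepFun (MeasurableSpace.comap (g ∘ X) inferInstance)
      ((hg.comp hX).comap_le) T X μ :=
  condIndepFun_of_condDistrib_factors_general μ T X g hT hX hg hfac
end

section
/- Let (Ω, 𝓕, μ) be a standard Borel probability space, T : Ω → ℝ measurable, E a standard Borel space, X : Ω → E measurable, L > 0 fixed, and H : E → (ℝ → ℝ≥0) with (x,s) ↦ H(x)(s) jointly measurable. Assume that for (μ.map X)-almost every x, the regular conditional distribution of T given X = x is absolutely continuous with respect to Lebesgue measure with density t ↦ 1_{[0,∞)}(t) · H(x)(t) · exp(−∫₀ᵗ H(x)(s) ds). Define the propensity process Θ_L : Ω → (ℝ → ℝ≥0) by Θ_L(ω)(s) = H(X(ω))(s) for s ∈ [0, L) and Θ_L(ω)(s) = 0 for s ∉ [0, L). Then the restricted treatment time U = min(T, L) is conditionally independent of X given the σ-algebra generated by Θ_L. -/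
/-!
Given `X`, the law of `U = min T L` is determined by the law of `T` on `(-∞, L)`, and there the
hazard density only involves the hazard on `[0, L)`, i.e. the propensity process `Θ_L`. Hence
`P(U ∈ s | X)` is a function of `Θ_L`, which gives the conditional independence because
`σ(Θ_L) ≤ σ(X)`. The delicate point is `σ(Θ_L)`-measurability: the density integrates
`Θ_L ω t` over `t`, while `σ(Θ_L)` only makes each coordinate measurable. Integrating the
coordinates against the conditional-expectation kernel of `σ(Θ_L)` yields a version of the
process that is jointly `σ(Θ_L) ⊗ 𝓑(ℝ)`-measurable, and the density may be computed from it.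
-/

open MeasureTheory ProbabilityTheory
open scoped ENNReal NNReal

section CondIndep

variable {Ω : Type*} {m m₂ : MeasurableSpace Ω} [mΩ : MeasurableSpace Ω] [StandardBorelSpace Ω]
  {μ : Measure Ω} [IsFiniteMeasure μ]

lemma condIndepSet_of_condExp_ae_eq_stronglyMeasurable (hm : m ≤ m₂) (hm₂ : m₂ ≤ mΩ)
    {A B : Set Ω} (hA : MeasurableSet A) (hB : MeasurableSet[m₂] B) {φ : Ω → ℝ}
    (hφ : StronglyMeasurable[m] φ) (hAφ : μ⟦A | m₂⟧ =ᵐ[μ] φ) :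
    CondIndepSet m (hm.trans hm₂) A B μ := by
  rw [condIndepSet_iff _ _ _ _ hA (hm₂ B hB)]
  have hφ_int : Integrable φ μ := integrable_condExp.congr hAφ
  have hA_m : μ⟦A | m⟧ =ᵐ[μ] φ :=
    calc μ⟦A | m⟧ =ᵐ[μ] μ[μ⟦A | m₂⟧ | m] := (condExp_condExp_of_le hm hm₂).symm
      _ =ᵐ[μ] μ[φ | m] := condExp_congr_ae hAφ
      _ = φ := condExp_of_stronglyMeasurable (hm.trans hm₂) hφ hφ_int
  have hAB_m₂ : μ⟦A ∩ B | m₂⟧ =ᵐ[μ] φ * B.indicator fun _ => (1 : ℝ) := by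
    have hAB : (A ∩ B).indicator (fun _ => (1 : ℝ)) = B.indicator (A.indicator fun _ => 1) := by
      rw [Set.indicator_indicator, Set.inter_comm]
    rw [hAB]
    filter_upwards [condExp_indicator ((integrable_const (1 : ℝ)).indicator hA) hB, hAφ]
      with ω h1 h2
    rw [h1]
    by_cases hω : ω ∈ B <;> simp [hω, h2]
  calc μ⟦A ∩ B | m⟧ =ᵐ[μ] μ[μ⟦A ∩ B | m₂⟧ | m] := (condExp_condExp_of_le hm hm₂).symm
    _ =ᵐ[μ] μ[φ * B.indicator fun _ => (1 : ℝ) | m] := condExp_congr_ae hAB_m₂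
    _ =ᵐ[μ] φ * μ⟦B | m⟧ := by
      have hφB : (φ * B.indicator fun _ => (1 : ℝ)) = B.indicator φ := by
        ext ω; by_cases hω : ω ∈ B <;> simp [hω]
      exact condExp_mul_of_stronglyMeasurable_left hφ (hφB ▸ hφ_int.indicator (hm₂ B hB))
        ((integrable_const 1).indicator (hm₂ B hB))
    _ =ᵐ[μ] μ⟦A | m⟧ * μ⟦B | m⟧ := hA_m.symm.mul (Filter.EventuallyEq.refl _ _)

lemma condIndepFun_of_condExp_ae_eq_stronglyMeasurable {β γ : Type*} [MeasurableSpace β]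
    [mγ : MeasurableSpace γ] {U : Ω → β} {Y : Ω → γ} (hU : Measurable U) (hY : Measurable Y)
    (hm : m ≤ mγ.comap Y)
    (h : ∀ s, MeasurableSet s →
      ∃ φ : Ω → ℝ, StronglyMeasurable[m] φ ∧ μ⟦U ⁻¹' s | mγ.comap Y⟧ =ᵐ[μ] φ) :
    CondIndepFun m (hm.trans hY.comap_le) U Y μ := by
  refine (condIndepFun_iff_condIndepSet_preimage hU hY).2 fun s t hs ht => ?_
  obtain ⟨φ, hφ, hsφ⟩ := h s hs
  exact condIndepSet_of_condExp_ae_eq_stronglyMeasurable hm hY.comap_le (hU hs) ⟨t, ht, rfl⟩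
    hφ hsφ

end CondIndep

section CondExpKernel

variable {Ω : Type*} {m mΩ : MeasurableSpace Ω} [StandardBorelSpace Ω]
  {μ : Measure Ω} [IsFiniteMeasure μ]

lemma ae_ae_condExpKernel_eq {β : Type*} [MeasurableSpace β] [MeasurableEq β]
    (hm : m ≤ mΩ) {f : Ω → β} (hf : Measurable[m] f) :
    ∀ᵐ ω ∂μ, ∀ᵐ ω' ∂condExpKernel μ m ω, f ω' = f ω := by
  have hdiag : MeasurableSet[m.prod mΩ] {p : Ω × Ω | f p.2 = f p.1} :=
    measurableSet_eq_fun (m := m.prod mΩ)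
      ((hf.mono hm le_rfl).comp measurable_snd) (hf.comp measurable_fst)
  have h : ∀ᵐ p ∂(μ.trim hm ⊗ₘ condExpKernel μ m), f p.2 = f p.1 := by
    rw [compProd_trim_condExpKernel, ae_map_iff _ hdiag]
    · exact Filter.Eventually.of_forall fun _ => rfl
    · exact @Measurable.aemeasurable _ _ _ (m.prod mΩ) _ _
        (@Measurable.prodMk Ω mΩ Ω Ω m mΩ id id (measurable_id'' hm) measurable_id)
  exact ae_of_ae_trim hm (Measure.ae_ae_of_ae_compProd h)

lemma lintegral_condExpKernel_ae_eq (hm : m ≤ mΩ) {f : Ω → ℝ≥0∞} (hf : Measurable[m] f) :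
    ∀ᵐ ω ∂μ, ∫⁻ ω', f ω' ∂condExpKernel μ m ω = f ω := by
  filter_upwards [ae_ae_condExpKernel_eq hm hf] with ω hω
  rw [lintegral_congr_ae hω, lintegral_const, measure_univ, mul_one]

theorem exists_measurable_prod_ae_ae_eq {β : Type*} {mβ : MeasurableSpace β} (hm : m ≤ mΩ)
    (ν : Measure β) [SFinite ν] {F : Ω × β → ℝ≥0∞} (hF : Measurable F)
    (hFm : ∀ b, Measurable[m] fun ω => F (ω, b)) :
    ∃ G : Ω × β → ℝ≥0∞, Measurable[m.prod mβ] G ∧ ∀ᵐ ω ∂μ, ∀ᵐ b ∂ν, G (ω, b) = F (ω, b) := by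
  set G : Ω × β → ℝ≥0∞ := fun p => ∫⁻ ω', F (ω', p.2) ∂condExpKernel μ m p.1
  have hG : Measurable[m.prod mβ] G :=
    Measurable.lintegral_kernel_prod_right' (κ := (condExpKernel μ m).prodMkRight β)
      (hF.comp (measurable_snd.prodMk (measurable_snd.comp measurable_fst)))
  refine ⟨G, hG, ?_⟩
  have hGF : MeasurableSet {p : Ω × β | G (p.1, p.2) = F (p.1, p.2)} :=
    measurableSet_eq_fun (hG.mono (sup_le_sup (MeasurableSpace.comap_mono hm) le_rfl) le_rfl) hF
  rw [Measure.ae_ae_comm hGF]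
  exact Filter.Eventually.of_forall fun b => lintegral_condExpKernel_ae_eq hm (hFm b)

end CondExpKernel

lemma Measurable.intervalIntegral_prod {α : Type*} {mα : MeasurableSpace α} {f : α → ℝ → ℝ}
    (hf : Measurable (Function.uncurry f)) (a : ℝ) :
    Measurable fun p : α × ℝ => ∫ s in a..p.2, f p.1 s := by
  have hIoc : ∀ lo hi : α × ℝ → ℝ, Measurable lo → Measurable hi →
      Measurable fun p : α × ℝ => ∫ s in Set.Ioc (lo p) (hi p), f p.1 s := by
    intro lo hi hlo hhi
    simp_rw [← integral_indicator measurableSet_Ioc]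
    refine (StronglyMeasurable.integral_prod_right' (f := fun q : (α × ℝ) × ℝ =>
      (Set.Ioc (lo q.1) (hi q.1)).indicator (f q.1.1) q.2) ?_).measurable
    refine (Measurable.ite ?_ (hf.comp (measurable_fst.fst.prodMk measurable_snd))
      measurable_const).stronglyMeasurable
    exact (measurableSet_lt (hlo.comp measurable_fst) measurable_snd).inter
      (measurableSet_le measurable_snd (hhi.comp measurable_fst))
  simp_rw [intervalIntegral]
  exact (hIoc _ _ measurable_const measurable_snd).sub (hIoc _ _ measurable_snd measurable_const)

lemma measurable_withDensity_apply {α β : Type*} {mα : MeasurableSpace α} [MeasurableSpace β]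
    (ν : Measure β) [SFinite ν] {f : α → β → ℝ≥0∞} (hf : Measurable (Function.uncurry f))
    {A : Set β} (hA : MeasurableSet A) :
    Measurable fun a => ν.withDensity (f a) A := by
  simp_rw [withDensity_apply _ hA]
  exact hf.lintegral_prod_right'

noncomputable def hazardDensity (h : ℝ → ℝ≥0) (t : ℝ) : ℝ≥0∞ :=
  ENNReal.ofReal ((h t : ℝ) * Real.exp (-∫ s in (0 : ℝ)..t, (h s : ℝ)))

lemma measurable_hazardDensity {α : Type*} {mα : MeasurableSpace α} {h : α → ℝ → ℝ≥0}
    (hh : Measurable (Function.uncurry h)) :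
    Measurable (Function.uncurry fun a => hazardDensity (h a)) := by
  have hR : Measurable (Function.uncurry fun a s => (h a s : ℝ)) := hh.coe_nnreal_real
  exact (hR.mul (hR.intervalIntegral_prod 0).neg.exp).ennreal_ofReal

lemma hazardDensity_congr_ae {h h' : ℝ → ℝ≥0} (hh : h =ᵐ[volume] h') :
    hazardDensity h =ᵐ[volume] hazardDensity h' := by
  have hint : ∀ t, ∫ s in (0 : ℝ)..t, (h s : ℝ) = ∫ s in (0 : ℝ)..t, (h' s : ℝ) := fun t =>
    intervalIntegral.integral_congr_ae (hh.mono fun s hs _ => by rw [hs])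
  filter_upwards [hh] with t ht
  simp only [hazardDensity, ht, hint]

lemma eqOn_hazardDensity_indicator_Ico (h : ℝ → ℝ≥0) (L : ℝ) :
    Set.EqOn (hazardDensity ((Set.Ico 0 L).indicator h)) (hazardDensity h) (Set.Ico 0 L) := by
  intro t ht
  have hint : ∫ s in (0 : ℝ)..t, (((Set.Ico 0 L).indicator h s : ℝ≥0) : ℝ)
      = ∫ s in (0 : ℝ)..t, (h s : ℝ) :=
    intervalIntegral.integral_congr fun s hs => by
      rw [Set.uIcc_of_le ht.1] at hs
      rw [Set.indicator_of_mem (Set.mem_Ico.2 ⟨hs.1, hs.2.trans_lt ht.2⟩)]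
  simp only [hazardDensity, Set.indicator_of_mem ht, hint]

lemma measure_preimage_min (ν : Measure ℝ) [IsProbabilityMeasure ν] (L : ℝ) {s : Set ℝ}
    (hs : MeasurableSet s) :
    ν ((fun u => min u L) ⁻¹' s)
      = ν.restrict (Set.Iio L) s + s.indicator 1 L * (1 - ν.restrict (Set.Iio L) Set.univ) := by
  have hlow : (fun u => min u L) ⁻¹' s ∩ Set.Iio L = s ∩ Set.Iio L := by
    ext u
    simp +contextual [min_eq_left_of_lt]
  have hhigh : ν ((fun u => min u L) ⁻¹' s \ Set.Iio L) = s.indicator 1 L * ν (Set.Ici L) := by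
    have hdiff : (fun u => min u L) ⁻¹' s \ Set.Iio L = {_u | L ∈ s} ∩ Set.Ici L := by
      ext u
      simp +contextual
    by_cases hL : L ∈ s <;> simp [hdiff, hL]
  rw [← measure_inter_add_sdiff _ measurableSet_Iio, hlow, hhigh, Measure.restrict_apply hs,
    Measure.restrict_apply_univ, ← Set.compl_Iio, prob_compl_eq_one_sub measurableSet_Iio]

lemma restrict_Iio_withDensity_indicator_Ici (f : ℝ → ℝ≥0∞) (L : ℝ) :
    (volume.withDensity ((Set.Ici 0).indicator f)).restrict (Set.Iio L)
      = (volume.restrict (Set.Ico 0 L)).withDensity f := by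
  rw [restrict_withDensity measurableSet_Iio, ← withDensity_indicator measurableSet_Iio,
    Set.indicator_indicator, Set.inter_comm, Set.Ici_inter_Iio,
    withDensity_indicator measurableSet_Ico]

lemma restrict_Iio_withDensity_hazardDensity {h h' : ℝ → ℝ≥0} {L : ℝ}
    (hh' : (Set.Ico 0 L).indicator h =ᵐ[volume] h') :
    (volume.withDensity ((Set.Ici 0).indicator (hazardDensity h))).restrict (Set.Iio L)
      = (volume.restrict (Set.Ico 0 L)).withDensity (hazardDensity h') := by
  rw [restrict_Iio_withDensity_indicator_Ici]
  refine withDensity_congr_ae ?_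
  filter_upwards [ae_restrict_mem measurableSet_Ico,
    ae_restrict_of_ae (hazardDensity_congr_ae hh')] with t ht ht'
  rw [← eqOn_hazardDensity_indicator_Ico h L ht, ht']

/-- Proposition 1: if the regular conditional distribution of the treatment time `T` given the
covariate history `X` has hazard function `H (X ω)` (i.e. conditional density
`u ↦ 1_{[0,∞)}(u) · H x u · exp (-∫₀ᵘ H x s ds)` w.r.t. Lebesgue measure), then the restricted
treatment time `U = min (T, L)` is conditionally independent of `X` given the σ-algebra
generated by the propensity process `Θ_L ω = (s ↦ H (X ω) s` for `s ∈ [0, L)`, `0` otherwise`)`. -/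
theorem condIndepFun_min_given_propensityProcess
    {Ω E : Type*}
    [MeasurableSpace Ω] [StandardBorelSpace Ω]
    [MeasurableSpace E]
    (μ : Measure Ω) [IsProbabilityMeasure μ]
    (T : Ω → ℝ) (X : Ω → E) (hT : Measurable T) (hX : Measurable X)
    (L : ℝ)
    (H : E → ℝ → NNReal) (hH : Measurable fun p : E × ℝ => H p.1 p.2)
    (hdens : ∀ᵐ x ∂(μ.map X), condDistrib T X μ x =
      volume.withDensity fun t : ℝ =>
        Set.indicator (Set.Ici (0 : ℝ))
          (fun u => ENNReal.ofReal
            ((H x u : ℝ) * Real.exp (-∫ s in (0 : ℝ)..u, (H x s : ℝ)))) t) :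
    CondIndepFun
      (MeasurableSpace.comap
        (fun ω => fun s : ℝ => if s ∈ Set.Ico (0 : ℝ) L then H (X ω) s else 0) inferInstance)
      (Measurable.comap_le (measurable_pi_lambda _ (fun s => by
        by_cases hs : s ∈ Set.Ico (0 : ℝ) L
        · simp only [if_pos hs]
          exact hH.comp (hX.prodMk measurable_const)
        · simp only [if_neg hs]
          exact measurable_const)))
      (fun ω => min (T ω) L) X μ := by
  set Θ₀ : E → ℝ → ℝ≥0 := fun x s => if s ∈ Set.Ico (0 : ℝ) L then H x s else 0
  have hΘ₀ : Measurable (Function.uncurry Θ₀) :=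
    Measurable.ite (measurable_snd measurableSet_Ico) hH measurable_const
  have hmX : MeasurableSpace.comap (Θ₀ ∘ X) MeasurableSpace.pi
      ≤ MeasurableSpace.comap X inferInstance :=
    ((measurable_pi_lambda Θ₀ fun _ => hΘ₀.of_uncurry_right).comp (comap_measurable X)).comap_le
  refine condIndepFun_of_condExp_ae_eq_stronglyMeasurable (hT.min measurable_const) hX hmX
    fun s hs => ?_
  obtain ⟨G, hG, hGΘ⟩ := exists_measurable_prod_ae_ae_eq (μ := μ) (hmX.trans hX.comap_le) volume
    (hΘ₀.comp (hX.prodMap measurable_id)).coe_nnreal_ennreal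
    fun t => ((measurable_pi_apply t).comp (comap_measurable (Θ₀ ∘ X))).coe_nnreal_ennreal
  -- `κ ω` is the law of `T` on `[0, L)` given `X = X ω`, read off the jointly measurable version
  -- `G` of the propensity process.
  set κ : Ω → Measure ℝ := fun ω =>
    (volume.restrict (Set.Ico 0 L)).withDensity (hazardDensity fun t => (G (ω, t)).toNNReal)
  have hκ : ∀ᵐ ω ∂μ, (condDistrib T X μ (X ω)).restrict (Set.Iio L) = κ ω := by
    filter_upwards [ae_of_ae_map hX.aemeasurable hdens, hGΘ] with ω hω hGω
    rw [hω]
    refine restrict_Iio_withDensity_hazardDensity ?_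
    filter_upwards [hGω] with t ht
    simp [ht, Θ₀, Set.indicator_apply]
  refine ⟨fun ω => (κ ω s + s.indicator 1 L * (1 - κ ω Set.univ)).toReal, ?_, ?_⟩
  · have hκ_meas {A : Set ℝ} (hA : MeasurableSet A) :
        Measurable[MeasurableSpace.comap (Θ₀ ∘ X) MeasurableSpace.pi] fun ω => κ ω A :=
      measurable_withDensity_apply _ (measurable_hazardDensity hG.ennreal_toNNReal) hA
    exact ((hκ_meas hs).add (((hκ_meas .univ).const_sub 1).const_mul _)).ennreal_toReal
      |>.stronglyMeasurable
  · filter_upwards [condDistrib_ae_eq_condExp hX hT (measurable_id'.min measurable_const hs), hκ]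
      with ω hcond hω
    refine hcond.symm.trans ?_
    rw [measureReal_def, measure_preimage_min _ _ hs, hω]
end

section
/- Let (Ω, 𝓕, μ) be a probability space, let m_Y, m_X, and m_Θ be sub-σ-algebras of 𝓕 with m_Θ ≤ m_X, and let W : Ω → ℝ be a bounded measurable function (e.g., the indicator of the event {U_t ∈ A}). Suppose (i) the conditional expectation of W given m_Y ⊔ m_X equals almost surely the conditional expectation of W given m_X, and (ii) the conditional expectation of W given m_X equals almost surely the conditional expectation of W given m_Θ. Then the conditional expectation of W given m_Y ⊔ m_Θ equals almost surely the conditional expectation of W given m_Θ. -/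
open MeasureTheory

/-- Abstract σ-algebra form of Theorem 1: if `W` is bounded measurable, the conditional
expectation of `W` given `mY ⊔ mX` coincides a.s. with that given `mX` (strong ignorability),
and the conditional expectation of `W` given `mX` coincides a.s. with that given `mΘ ≤ mX`
(balancing), then the conditional expectation of `W` given `mY ⊔ mΘ` coincides a.s. with that
given `mΘ`. -/
theorem condexp_sup_eq_of_ignorable_of_balancing
    {Ω : Type*} (mY mX mΘ : MeasurableSpace Ω) {F : MeasurableSpace Ω}
    (μ : Measure Ω) [IsProbabilityMeasure μ]
    (hmY : mY ≤ F) (hmX : mX ≤ F) (hΘX : mΘ ≤ mX)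
    (W : Ω → ℝ) (hW : Measurable W) (C : ℝ) (hWbdd : ∀ ω, |W ω| ≤ C)
    (h_ignorable : μ[W | mY ⊔ mX] =ᵐ[μ] μ[W | mX])
    (h_balance : μ[W | mX] =ᵐ[μ] μ[W | mΘ]) :
    μ[W | mY ⊔ mΘ] =ᵐ[μ] μ[W | mΘ] := by
  calc μ[W | mY ⊔ mΘ]
      =ᵐ[μ] μ[μ[W | mY ⊔ mX] | mY ⊔ mΘ] :=
        (condExp_condExp_of_le (sup_le_sup_left hΘX mY) (sup_le hmY hmX)).symm
    _ =ᵐ[μ] μ[μ[W | mΘ] | mY ⊔ mΘ] :=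
        condExp_congr_ae (h_ignorable.trans h_balance)
    _ =ᵐ[μ] μ[W | mΘ] :=
        Filter.EventuallyEq.of_eq <|
          condExp_of_stronglyMeasurable (sup_le hmY (hΘX.trans hmX))
            (stronglyMeasurable_condExp.mono le_sup_right) integrable_condExp
end

section
/- Let (Ω, 𝓕, μ) be a standard Borel probability space, T : Ω → ℝ measurable, E a standard Borel space, X : Ω → E measurable, Y : Ω → ℝ measurable, L > 0 fixed, t ∈ [0, L), and H : E → (ℝ → ℝ≥0) with (x,s) ↦ H(x)(s) jointly measurable. Assume (i) for (μ.map X)-almost every x, the regular conditional distribution of T given X = x is absolutely continuous with respect to Lebesgue measure with density u ↦ 1_{[0,∞)}(u) · H(x)(u) · exp(−∫₀ᵘ H(x)(s) ds); and (ii) min(T,t) and Y are conditionally independent given the σ-algebra σ(X). Define the propensity process Θ_t : Ω → (ℝ → ℝ≥0) by Θ_t(ω)(s) = H(X(ω))(s) for s ∈ [0, t) and 0 otherwise. Then min(T,t) and Y are conditionally independent given the σ-algebra generated by Θ_t. -/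
/-!
Since `σ(Θ_t) ≤ σ(X)`, conditional independence given `σ(X)` descends to `σ(Θ_t)` by the tower
property as soon as every conditional probability `P(min(T, t) ∈ s | X)` has a
`σ(Θ_t)`-measurable version. Under the hazard model this probability is an explicit functional
of the hazard `H(X)` on `[0, t)`, but integrals of a path are not measurable for the product
σ-algebra on paths, so the functional cannot simply be composed with `Θ_t`. Instead, with `κ` the
conditional expectation kernel given `σ(Θ_t)`, a function `f` has a `σ(Θ_t)`-measurable version
as soon as `f y = f x` for `κ x`-a.e. `y`, for a.e. `x`. This property holds for the hazard at
each time `u < t`, survives arbitrary pointwise operations and, by Fubini, integration in `u`;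
so it passes to the cumulative hazard, the density, and the law of `min(T, t)`.
-/

open MeasureTheory ProbabilityTheory
open scoped ENNReal NNReal

theorem CondIndepFun.of_le_of_aestronglyMeasurable_condExp {Ω β γ : Type*}
    {m₁ m₂ : MeasurableSpace Ω} [mΩ : MeasurableSpace Ω] [StandardBorelSpace Ω]
    [MeasurableSpace β] [MeasurableSpace γ] {μ : Measure Ω} [IsFiniteMeasure μ]
    {f : Ω → β} {g : Ω → γ} (h12 : m₁ ≤ m₂) (h2 : m₂ ≤ mΩ) (hf : Measurable f)
    (hg : Measurable g) (h_ind : CondIndepFun m₂ h2 f g μ)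
    (h_meas : ∀ s, MeasurableSet s → AEStronglyMeasurable[m₁] (μ⟦f ⁻¹' s | m₂⟧) μ) :
    CondIndepFun m₁ (h12.trans h2) f g μ := by
  rw [condIndepFun_iff_condExp_inter_preimage_eq_mul hf hg] at h_ind ⊢
  intro s u hs hu
  have h_tower {A : Set Ω} : μ[μ⟦A | m₂⟧ | m₁] =ᵐ[μ] μ⟦A | m₁⟧ := condExp_condExp_of_le h12 h2
  have hf₁ : μ⟦f ⁻¹' s | m₁⟧ =ᵐ[μ] μ⟦f ⁻¹' s | m₂⟧ :=
    h_tower.symm.trans (condExp_of_aestronglyMeasurable' (h12.trans h2) (h_meas s hs)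
      integrable_condExp)
  calc μ⟦f ⁻¹' s ∩ g ⁻¹' u | m₁⟧
      =ᵐ[μ] μ[μ⟦f ⁻¹' s | m₂⟧ * μ⟦g ⁻¹' u | m₂⟧ | m₁] :=
        h_tower.symm.trans (condExp_congr_ae (h_ind s u hs hu))
    _ =ᵐ[μ] μ⟦f ⁻¹' s | m₂⟧ * μ[μ⟦g ⁻¹' u | m₂⟧ | m₁] :=
        condExp_mul_of_aestronglyMeasurable_left (h_meas s hs)
          (integrable_condExp.congr (h_ind s u hs hu)) integrable_condExp
    _ =ᵐ[μ] μ⟦f ⁻¹' s | m₁⟧ * μ⟦g ⁻¹' u | m₁⟧ := hf₁.symm.mul h_tower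

section CondExpKernel

variable {E : Type*} {m : MeasurableSpace E} [mE : MeasurableSpace E] [StandardBorelSpace E]
  {ν : Measure E} [IsFiniteMeasure ν]

theorem ae_ae_condExpKernel_of_ae (hm : m ≤ mE) {p : E → Prop} (hp : ∀ᵐ y ∂ν, p y) :
    ∀ᵐ x ∂ν, ∀ᵐ y ∂condExpKernel ν m x, p y := by
  rw [← condExpKernel_comp_trim (μ := ν) hm] at hp
  exact ae_of_ae_trim hm (Measure.ae_ae_of_ae_comp hp)

theorem ae_ae_condExpKernel_eq_of_measurable (hm : m ≤ mE) {β : Type*} [MeasurableSpace β]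
    [MeasurableEq β] {f : E → β} (hf : Measurable[m] f) :
    ∀ᵐ x ∂ν, ∀ᵐ y ∂condExpKernel ν m x, f y = f x := by
  have h_diag : MeasurableSet[m.prod mE] {p : E × E | f p.2 = f p.1} :=
    measurableSet_eq_fun ((hf.mono hm le_rfl).comp measurable_snd) (hf.comp measurable_fst)
  have h_meas_diag : @Measurable E (E × E) mE (m.prod mE) Function.diag :=
    (measurable_id'' hm).prodMk measurable_id
  have h_compProd : ∀ᵐ p ∂(ν.trim hm ⊗ₘ condExpKernel ν m), f p.2 = f p.1 := by
    rw [compProd_trim_condExpKernel hm,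
      @ae_map_iff E (E × E) mE (m.prod mE) ν _ ⟨_, h_meas_diag, .rfl⟩ _ h_diag]
    exact ae_of_all _ fun _ => rfl
  exact ae_of_ae_trim hm (Measure.ae_ae_of_ae_compProd h_compProd)

theorem ae_ae_condExpKernel_lintegral_eq (hm : m ≤ mE) {β : Type*} [MeasurableSpace β]
    {ρ : Measure β} [SFinite ρ] {f : E → β → ℝ≥0∞} (hf : Measurable (Function.uncurry f))
    (h : ∀ᵐ u ∂ρ, ∀ᵐ x ∂ν, ∀ᵐ y ∂condExpKernel ν m x, f y u = f x u) :
    ∀ᵐ x ∂ν, ∀ᵐ y ∂condExpKernel ν m x, ∫⁻ u, f y u ∂ρ = ∫⁻ u, f x u ∂ρ := by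
  let κ : Kernel E E := (condExpKernel ν m).comap id (measurable_id'' hm)
  have h_section (u : β) : MeasurableSet {p : E × E | f p.2 u = f p.1 u} :=
    measurableSet_eq_fun (hf.comp (measurable_snd.prodMk measurable_const))
      (hf.comp (measurable_fst.prodMk measurable_const))
  have h_meas : MeasurableSet {q : (E × E) × β | f q.1.2 q.2 = f q.1.1 q.2} :=
    measurableSet_eq_fun (hf.comp (measurable_fst.snd.prodMk measurable_snd))
      (hf.comp (measurable_fst.fst.prodMk measurable_snd))
  have h_prod : ∀ᵐ p ∂(ν ⊗ₘ κ), ∀ᵐ u ∂ρ, f p.2 u = f p.1 u := by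
    refine (Measure.ae_ae_comm (p := fun (p : E × E) u => f p.2 u = f p.1 u) h_meas).2 ?_
    filter_upwards [h] with u hu
    exact (Measure.ae_compProd_iff (h_section u)).2 hu
  have := Measure.ae_ae_of_ae_compProd (h_prod.mono fun p hp => lintegral_congr_ae hp)
  simpa only [κ, Kernel.comap_apply, id] using this

theorem aestronglyMeasurable_of_ae_ae_condExpKernel_eq {F : Type*} [NormedAddCommGroup F]
    [NormedSpace ℝ F] [CompleteSpace F] {f : E → F} (hf : StronglyMeasurable f)
    (h : ∀ᵐ x ∂ν, ∀ᵐ y ∂condExpKernel ν m x, f y = f x) :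
    AEStronglyMeasurable[m] f ν := by
  refine ⟨fun x => ∫ y, f y ∂condExpKernel ν m x, hf.integral_condExpKernel, ?_⟩
  filter_upwards [h] with x hx
  rw [integral_congr_ae hx, integral_const, probReal_univ, one_smul]

end CondExpKernel

theorem measurable_lintegral_Ioc {α : Type*} [MeasurableSpace α] {f : α → ℝ → ℝ≥0∞}
    (hf : Measurable (Function.uncurry f)) (a : ℝ) :
    Measurable fun p : α × ℝ => ∫⁻ r in Set.Ioc a p.2, f p.1 r := by
  simp_rw [← lintegral_indicator measurableSet_Ioc]
  refine Measurable.lintegral_prod_right' (f := fun q : (α × ℝ) × ℝ =>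
    {q : (α × ℝ) × ℝ | a < q.2 ∧ q.2 ≤ q.1.2}.indicator (fun q => f q.1.1 q.2) q) ?_
  exact (hf.comp (measurable_fst.fst.prodMk measurable_snd)).indicator
    ((measurableSet_lt measurable_const measurable_snd).inter
      (measurableSet_le measurable_snd measurable_fst.snd))

theorem intervalIntegral_coe_nnreal_eq_toReal_lintegral {h : ℝ → ℝ≥0} (hh : Measurable h)
    {a u : ℝ} (hau : a ≤ u) :
    ∫ r in a..u, (h r : ℝ) = (∫⁻ r in Set.Ioc a u, (h r : ℝ≥0∞)).toReal := by
  rw [intervalIntegral.integral_of_le hau, ← integral_toReal hh.coe_nnreal_ennreal.aemeasurable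
    (ae_of_all _ fun _ => ENNReal.coe_lt_top)]
  rfl

theorem withDensity_hazard_apply {h : ℝ → ℝ≥0} (hh : Measurable h) {B : Set ℝ}
    (hB : MeasurableSet B) :
    volume.withDensity (fun u => (Set.Ici 0).indicator
      (fun v => ENNReal.ofReal ((h v : ℝ) * Real.exp (-∫ r in (0 : ℝ)..v, (h r : ℝ)))) u) B
      = ∫⁻ u in B ∩ Set.Ici 0,
          ENNReal.ofReal (h u * Real.exp (-(∫⁻ r in Set.Ioc 0 u, (h r : ℝ≥0∞)).toReal)) := by
  rw [withDensity_apply _ hB, lintegral_indicator measurableSet_Ici,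
    Measure.restrict_restrict measurableSet_Ici, Set.inter_comm]
  refine setLIntegral_congr_fun (hB.inter measurableSet_Ici) fun u hu => ?_
  rw [intervalIntegral_coe_nnreal_eq_toReal_lintegral hh hu.2]

theorem measure_preimage_min_eq (P : Measure ℝ) (t : ℝ) (s : Set ℝ) :
    P ((fun u => min u t) ⁻¹' s) = P (s ∩ Set.Iio t) + s.indicator (fun _ => P (Set.Ici t)) t := by
  rw [← measure_inter_add_sdiff _ (measurableSet_Iio (a := t))]
  congr 2
  · ext u
    simp +contextual [min_eq_left_of_lt]
  · by_cases ht : t ∈ s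
    · rw [Set.indicator_of_mem ht]
      congr 1
      ext u
      simp +contextual [ht]
    · rw [Set.indicator_of_notMem ht, ← measure_empty (μ := P)]
      congr 1
      ext u
      simp only [Set.mem_sdiff, Set.mem_preimage, Set.mem_Iio, not_lt, Set.mem_empty_iff_false,
        iff_false, not_and]
      intro hu htu
      exact ht (min_eq_right htu ▸ hu)

section Hazard

variable {E : Type*} {m : MeasurableSpace E} [mE : MeasurableSpace E] [StandardBorelSpace E]
  {ν : Measure E} [IsFiniteMeasure ν] {κ : Kernel E ℝ} {H : E → ℝ → ℝ≥0} {t : ℝ}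

theorem ae_ae_condExpKernel_measure_inter_Iio_eq (hm : m ≤ mE)
    (hH : Measurable fun p : E × ℝ => H p.1 p.2)
    (hdens : ∀ᵐ x ∂ν, κ x = volume.withDensity fun u => (Set.Ici 0).indicator
      (fun v => ENNReal.ofReal ((H x v : ℝ) * Real.exp (-∫ r in (0 : ℝ)..v, (H x r : ℝ)))) u)
    (hHm : ∀ u ∈ Set.Ico 0 t, Measurable[m] fun x => H x u) {B : Set ℝ} (hB : MeasurableSet B) :
    ∀ᵐ x ∂ν, ∀ᵐ y ∂condExpKernel ν m x, κ y (B ∩ Set.Iio t) = κ x (B ∩ Set.Iio t) := by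
  set Λ : E → ℝ → ℝ≥0∞ := fun x u => ∫⁻ r in Set.Ioc 0 u, (H x r : ℝ≥0∞)
  set d : E → ℝ → ℝ≥0∞ := fun x u => ENNReal.ofReal (H x u * Real.exp (-(Λ x u).toReal))
  have hH' : Measurable (Function.uncurry fun x r => (H x r : ℝ≥0∞)) := hH.coe_nnreal_ennreal
  have hd_meas : Measurable (Function.uncurry d) :=
    ENNReal.measurable_ofReal.comp (hH.coe_nnreal_real.mul (Real.measurable_exp.comp
      (measurable_lintegral_Ioc hH' 0).ennreal_toReal.neg))
  have hH_const : ∀ u ∈ Set.Ico 0 t, ∀ᵐ x ∂ν, ∀ᵐ y ∂condExpKernel ν m x, H y u = H x u :=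
    fun u hu => ae_ae_condExpKernel_eq_of_measurable hm (hHm u hu)
  have hΛ_const : ∀ u ∈ Set.Ico 0 t, ∀ᵐ x ∂ν, ∀ᵐ y ∂condExpKernel ν m x, Λ y u = Λ x u := by
    refine fun u hu => ae_ae_condExpKernel_lintegral_eq hm hH'
      (ae_restrict_of_forall_mem measurableSet_Ioc fun r hr => ?_)
    filter_upwards [hH_const r ⟨hr.1.le, hr.2.trans_lt hu.2⟩] with x hx
    filter_upwards [hx] with y hy
    rw [hy]
  have hd_const : ∀ u ∈ Set.Ico 0 t, ∀ᵐ x ∂ν, ∀ᵐ y ∂condExpKernel ν m x, d y u = d x u := by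
    intro u hu
    filter_upwards [hH_const u hu, hΛ_const u hu] with x hxH hxΛ
    filter_upwards [hxH, hxΛ] with y hyH hyΛ
    simp only [d, hyH, hyΛ]
  have h_int_const : ∀ᵐ x ∂ν, ∀ᵐ y ∂condExpKernel ν m x,
      ∫⁻ u in B ∩ Set.Ico 0 t, d y u = ∫⁻ u in B ∩ Set.Ico 0 t, d x u :=
    ae_ae_condExpKernel_lintegral_eq hm hd_meas
      (ae_restrict_of_forall_mem (hB.inter measurableSet_Ico) fun u hu => hd_const u hu.2)
  have h_eq : ∀ᵐ x ∂ν, κ x (B ∩ Set.Iio t) = ∫⁻ u in B ∩ Set.Ico 0 t, d x u := by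
    filter_upwards [hdens] with x hx
    rw [hx, withDensity_hazard_apply (h := H x) (hH.comp measurable_prodMk_left)
      (hB.inter measurableSet_Iio), Set.inter_assoc, Set.Iio_inter_Ici]
  filter_upwards [h_eq, ae_ae_condExpKernel_of_ae hm h_eq, h_int_const] with x hx hx_ae hx_int
  filter_upwards [hx_ae, hx_int] with y hy hy_int
  rw [hx, hy, hy_int]

theorem ae_ae_condExpKernel_measure_preimage_min_eq [IsMarkovKernel κ] (hm : m ≤ mE)
    (hH : Measurable fun p : E × ℝ => H p.1 p.2)
    (hdens : ∀ᵐ x ∂ν, κ x = volume.withDensity fun u => (Set.Ici 0).indicator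
      (fun v => ENNReal.ofReal ((H x v : ℝ) * Real.exp (-∫ r in (0 : ℝ)..v, (H x r : ℝ)))) u)
    (hHm : ∀ u ∈ Set.Ico 0 t, Measurable[m] fun x => H x u) {s : Set ℝ} (hs : MeasurableSet s) :
    ∀ᵐ x ∂ν, ∀ᵐ y ∂condExpKernel ν m x,
      κ y ((fun u => min u t) ⁻¹' s) = κ x ((fun u => min u t) ⁻¹' s) := by
  filter_upwards [ae_ae_condExpKernel_measure_inter_Iio_eq hm hH hdens hHm hs,
    ae_ae_condExpKernel_measure_inter_Iio_eq hm hH hdens hHm MeasurableSet.univ] with x hxs hx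
  filter_upwards [hxs, hx] with y hys hy
  simp only [measure_preimage_min_eq, ← Set.compl_Iio, prob_compl_eq_one_sub measurableSet_Iio]
  rw [Set.univ_inter] at hy hx
  rw [hys, hy]

end Hazard

/-- Theorem 1 (conditional-independence form): under the hazard model for treatment assignment,
if the restricted treatment time `min (T, t)` and the potential outcome `Y` are conditionally
independent given `σ(X)`, then they are conditionally independent given the σ-algebra generated
by the propensity process `Θ_t`. -/
theorem condIndepFun_min_outcome_given_propensityProcess
    {Ω E : Type*}
    [MeasurableSpace Ω] [StandardBorelSpace Ω]
    [MeasurableSpace E] [StandardBorelSpace E]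
    (μ : Measure Ω) [IsProbabilityMeasure μ]
    (T : Ω → ℝ) (X : Ω → E) (Y : Ω → ℝ)
    (hT : Measurable T) (hX : Measurable X) (hY : Measurable Y)
    (t : ℝ)
    (H : E → ℝ → NNReal) (hH : Measurable fun p : E × ℝ => H p.1 p.2)
    (hdens : ∀ᵐ x ∂(μ.map X), condDistrib T X μ x =
      volume.withDensity fun u : ℝ =>
        Set.indicator (Set.Ici (0 : ℝ))
          (fun v => ENNReal.ofReal
            ((H x v : ℝ) * Real.exp (-∫ s in (0 : ℝ)..v, (H x s : ℝ)))) u)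
    (h_ignorable : CondIndepFun (MeasurableSpace.comap X inferInstance) hX.comap_le
      (fun ω => min (T ω) t) Y μ) :
    CondIndepFun
      (MeasurableSpace.comap
        (fun ω => fun s : ℝ => if s ∈ Set.Ico (0 : ℝ) t then H (X ω) s else 0) inferInstance)
      (Measurable.comap_le (measurable_pi_lambda _ (fun s => by
        by_cases hs : s ∈ Set.Ico (0 : ℝ) t
        · simp only [if_pos hs]
          exact hH.comp (hX.prodMk measurable_const)
        · simp only [if_neg hs]
          exact measurable_const)))
      (fun ω => min (T ω) t) Y μ := by
  let Θ : E → ℝ → ℝ≥0 := fun x s => if s ∈ Set.Ico 0 t then H x s else 0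
  have hΘ : Measurable Θ := measurable_pi_lambda _ fun s => by
    by_cases hs : s ∈ Set.Ico 0 t
    · simp only [Θ, if_pos hs]
      exact hH.comp measurable_prodMk_right
    · simp only [Θ, if_neg hs]
      exact measurable_const
  have hcomap : MeasurableSpace.comap (Θ ∘ X) inferInstance
      = (MeasurableSpace.comap Θ inferInstance).comap X := MeasurableSpace.comap_comp.symm
  have hHm (u : ℝ) (hu : u ∈ Set.Ico 0 t) :
      Measurable[MeasurableSpace.comap Θ inferInstance] fun x => H x u := by
    simpa only [Function.comp_def, Θ, if_pos hu] using
      (measurable_pi_apply u).comp (comap_measurable Θ)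
  have hXΘ : Measurable[MeasurableSpace.comap (Θ ∘ X) inferInstance,
      MeasurableSpace.comap Θ inferInstance] X := hcomap ▸ comap_measurable X
  refine CondIndepFun.of_le_of_aestronglyMeasurable_condExp
    (hcomap ▸ MeasurableSpace.comap_mono hΘ.comap_le) hX.comap_le (hT.min measurable_const) hY
    h_ignorable fun s hs => ?_
  have hA : MeasurableSet ((fun u => min u t) ⁻¹' s) := (measurable_id.min measurable_const) hs
  obtain ⟨φ, hφ, hφ_eq⟩ := aestronglyMeasurable_of_ae_ae_condExpKernel_eq
    ((condDistrib T X μ).measurable_coe hA).ennreal_toReal.stronglyMeasurable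
    ((ae_ae_condExpKernel_measure_preimage_min_eq hΘ.comap_le hH hdens hHm hs).mono
      fun _ hx => hx.mono fun _ hy => by rw [hy])
  exact ⟨φ ∘ X, hφ.comp_measurable hXΘ, (condDistrib_ae_eq_condExp hX hT hA).symm.trans
    (ae_of_ae_map hX.aemeasurable hφ_eq)⟩
end
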